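/- arXiv:0911.0116 — 2 statements merged into one kernel-verified Lean document; each statement's English description precedes it below -/
import Mathlib

section
/- For an odd positive integer n and any nonempty subset W of Fin n, |Σ_{σ : Fin n → {±1}} (Π_{i∈W} σ_i) · sign(Σ_i σ_i)| ≤ Σ_{σ} σ_0 · sign(Σ_i σ_i) = 2 · C(n-1, (n-1)/2). -/
/-!
Flipping the spin at a site `i ∈ W` negates `∏ j ∈ W, σ j`, so twice the `W`-correlation of any
`f` is the `W`-correlation of the discrete derivative `f σ - f (σ with σ i flipped)`. For the
majority sign and an odd number of sites this derivative is `2 σ i` when the other spins are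
balanced (`i` is pivotal) and `0` otherwise. Hence the `W`-correlation is a signed count of
the configurations in which `i` is pivotal, and for `W = {i}` it is their exact number
`2 * C(n - 1, (n - 1) / 2)`.
-/

/-- The spin value of a Boolean configuration entry: `true ↦ 1`, `false ↦ -1`. -/
def spin (b : Bool) : ℤ := if b then 1 else -1

open Finset

lemma spin_not (b : Bool) : spin (!b) = -spin b := by cases b <;> rfl

lemma spin_mul_self (b : Bool) : spin b * spin b = 1 := by cases b <;> rfl

lemma abs_spin (b : Bool) : |spin b| = 1 := by cases b <;> rfl

lemma sign_add_spin_sub_sign_sub_spin {R : ℤ} (hR : Even R) (b : Bool) :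
    Int.sign (R + spin b) - Int.sign (R - spin b) = if R = 0 then 2 * spin b else 0 := by
  obtain ⟨k, rfl⟩ := hR
  rcases lt_trichotomy k 0 with hk | rfl | hk
  · rw [Int.sign_eq_neg_one_of_neg (by cases b <;> simp [spin] <;> omega),
      Int.sign_eq_neg_one_of_neg (by cases b <;> simp [spin] <;> omega), if_neg (by omega),
      sub_self]
  · cases b <;> rfl
  · rw [Int.sign_eq_one_of_pos (by cases b <;> simp [spin] <;> omega),
      Int.sign_eq_one_of_pos (by cases b <;> simp [spin] <;> omega), if_neg (by omega),
      sub_self]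

section

variable {α : Type*}

lemma abs_prod_spin (s : Finset α) (σ : α → Bool) : |∏ j ∈ s, spin (σ j)| = 1 := by
  rw [Finset.abs_prod]
  exact Finset.prod_eq_one fun j _ => abs_spin (σ j)

lemma sum_spin_eq_two_mul_card_sub (s : Finset α) (σ : α → Bool) :
    ∑ j ∈ s, spin (σ j) = 2 * #{j ∈ s | σ j} - #s := by
  have h : ∀ b : Bool, spin b = 2 * (if b then 1 else 0) - 1 := by decide
  simp only [h, Finset.sum_sub_distrib, ← Finset.mul_sum, Finset.sum_boole, Finset.sum_const,
    nsmul_eq_mul, mul_one]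

lemma even_sum_spin_iff (s : Finset α) (σ : α → Bool) :
    Even (∑ j ∈ s, spin (σ j)) ↔ Even #s := by
  rw [sum_spin_eq_two_mul_card_sub, Int.even_sub, Int.even_coe_nat]
  simp

variable [DecidableEq α]

def flipAt (i : α) (σ : α → Bool) : α → Bool := Function.update σ i (!σ i)

lemma flipAt_involutive (i : α) : Function.Involutive (flipAt i) := fun σ => by
  simp [flipAt]

lemma flipAt_apply_self (i : α) (σ : α → Bool) : flipAt i σ i = !σ i := by
  simp [flipAt]

lemma flipAt_apply_of_ne {i j : α} (h : j ≠ i) (σ : α → Bool) : flipAt i σ j = σ j :=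
  Function.update_of_ne h _ _

lemma prod_spin_flipAt {W : Finset α} {i : α} (hi : i ∈ W) (σ : α → Bool) :
    ∏ j ∈ W, spin (flipAt i σ j) = -∏ j ∈ W, spin (σ j) := by
  rw [← Finset.mul_prod_erase W _ hi, ← Finset.mul_prod_erase W _ hi, flipAt_apply_self,
    spin_not, neg_mul]
  congr 2
  exact Finset.prod_congr rfl fun j hj => by rw [flipAt_apply_of_ne (Finset.ne_of_mem_erase hj)]

lemma sum_erase_spin_flipAt (s : Finset α) (i : α) (σ : α → Bool) :
    ∑ j ∈ s.erase i, spin (flipAt i σ j) = ∑ j ∈ s.erase i, spin (σ j) :=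
  Finset.sum_congr rfl fun j hj => by rw [flipAt_apply_of_ne (Finset.ne_of_mem_erase hj)]

variable [Fintype α]

lemma two_mul_sum_prod_spin_mul {W : Finset α} {i : α} (hi : i ∈ W) (f : (α → Bool) → ℤ) :
    2 * ∑ σ, (∏ j ∈ W, spin (σ j)) * f σ
      = ∑ σ, (∏ j ∈ W, spin (σ j)) * (f σ - f (flipAt i σ)) := by
  have hflip : ∑ σ, (∏ j ∈ W, spin (σ j)) * f σ
      = -∑ σ, (∏ j ∈ W, spin (σ j)) * f (flipAt i σ) := by
    rw [← (flipAt_involutive i).bijective.sum_comp]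
    simp only [prod_spin_flipAt hi, neg_mul, Finset.sum_neg_distrib]
  rw [two_mul]
  nth_rewrite 2 [hflip]
  rw [← sub_eq_add_neg, ← Finset.sum_sub_distrib]
  simp only [mul_sub]

def pivotal (i : α) : Finset (α → Bool) := {σ | ∑ j ∈ univ.erase i, spin (σ j) = 0}

lemma sum_prod_spin_mul_sign_eq (hodd : Odd (Fintype.card α)) {W : Finset α} {i : α}
    (hi : i ∈ W) :
    ∑ σ : α → Bool, (∏ j ∈ W, spin (σ j)) * Int.sign (∑ j, spin (σ j))
      = ∑ σ ∈ pivotal i, (∏ j ∈ W, spin (σ j)) * spin (σ i) := by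
  have heven : Even #(univ.erase i) := by
    rw [card_erase_of_mem (mem_univ i), card_univ]
    exact Nat.Odd.sub_odd hodd odd_one
  have hdiff : ∀ σ : α → Bool, Int.sign (∑ j, spin (σ j)) - Int.sign (∑ j, spin (flipAt i σ j))
      = if σ ∈ pivotal i then 2 * spin (σ i) else 0 := by
    intro σ
    rw [← add_sum_erase _ _ (mem_univ i), ← add_sum_erase _ _ (mem_univ i),
      sum_erase_spin_flipAt, flipAt_apply_self, spin_not, add_comm, add_comm (-_),
      ← sub_eq_add_neg, sign_add_spin_sub_sign_sub_spin ((even_sum_spin_iff _ σ).2 heven)]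
    simp [pivotal]
  apply mul_left_cancel₀ (two_ne_zero' ℤ)
  rw [two_mul_sum_prod_spin_mul hi]
  simp only [hdiff, mul_ite, mul_zero, ← Finset.sum_filter, Finset.mul_sum]
  exact Finset.sum_congr (by ext; simp [pivotal]) fun σ _ => by ring

lemma card_filter_card_erase_eq (i : α) (t : ℕ) :
    #({σ | #{j ∈ univ.erase i | σ j} = t} : Finset (α → Bool))
      = 2 * (Fintype.card α - 1).choose t := by
  have hfilter : ∀ (b : Bool) (u : Finset α), u ⊆ univ.erase i →
      {j ∈ univ.erase i | (if j = i then b else decide (j ∈ u))} = u := by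
    intro b u hu
    ext j
    by_cases hj : j = i
    · subst hj
      simpa using fun h => (mem_erase.1 (hu h)).1 rfl
    · simp [hj]
  calc _ = #((univ : Finset Bool) ×ˢ powersetCard t (univ.erase i)) := by
        refine card_nbij' (fun σ => (σ i, {j ∈ univ.erase i | σ j}))
          (fun p j => if j = i then p.1 else decide (j ∈ p.2)) ?_ ?_ ?_ ?_
        · intro σ hσ
          simp_all [mem_powersetCard, filter_subset]
        · rintro ⟨b, u⟩ hu
          simp only [coe_product, coe_univ, Set.mem_prod, Set.mem_univ, mem_coe,
            mem_powersetCard, true_and] at hu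
          simp only [coe_filter, Set.mem_ofPred_eq, mem_univ, true_and]
          rw [hfilter b u hu.1]
          exact hu.2
        · intro σ _
          funext j
          by_cases h : j = i <;> simp [h]
        · rintro ⟨b, u⟩ hu
          simp only [coe_product, coe_univ, Set.mem_prod, Set.mem_univ, mem_coe,
            mem_powersetCard, true_and] at hu
          exact Prod.ext (if_pos rfl) (hfilter b u hu.1)
    _ = 2 * (Fintype.card α - 1).choose t := by
        rw [card_product, card_powersetCard, card_erase_of_mem (mem_univ i), card_univ]
        rfl

lemma card_pivotal (hodd : Odd (Fintype.card α)) (i : α) :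
    #(pivotal i) = 2 * (Fintype.card α - 1).choose ((Fintype.card α - 1) / 2) := by
  rw [← card_filter_card_erase_eq i]
  congr 1
  refine Finset.filter_congr fun σ _ => ?_
  obtain ⟨r, hr⟩ := hodd
  rw [sum_spin_eq_two_mul_card_sub, card_erase_of_mem (mem_univ i), card_univ]
  omega

lemma sum_spin_mul_sign_eq_card_pivotal (hodd : Odd (Fintype.card α)) (i : α) :
    ∑ σ : α → Bool, spin (σ i) * Int.sign (∑ j, spin (σ j)) = #(pivotal i) := by
  simpa [spin_mul_self] using sum_prod_spin_mul_sign_eq hodd (mem_singleton_self i)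

lemma abs_sum_prod_spin_mul_sign_le_card_pivotal (hodd : Odd (Fintype.card α))
    {W : Finset α} {i : α} (hi : i ∈ W) :
    |∑ σ : α → Bool, (∏ j ∈ W, spin (σ j)) * Int.sign (∑ j, spin (σ j))| ≤ #(pivotal i) := by
  rw [sum_prod_spin_mul_sign_eq hodd hi]
  calc _ ≤ ∑ σ ∈ pivotal i, |(∏ j ∈ W, spin (σ j)) * spin (σ i)| := abs_sum_le_sum_abs _ _
    _ = #(pivotal i) := by simp [abs_mul, abs_prod_spin, abs_spin]

end

/-- For odd `n` and any nonempty `W ⊆ Fin n`, the `W`-correlation with the majority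
sign is dominated in absolute value by the single-site correlation, which equals
`2 * C(n-1, (n-1)/2)`. -/
theorem majority_correlation_dominated (n : ℕ) (hpos : 0 < n) (hodd : Odd n)
    (W : Finset (Fin n)) (hW : W.Nonempty) :
    (∑ σ : Fin n → Bool, spin (σ ⟨0, hpos⟩) * Int.sign (∑ i, spin (σ i)))
      = 2 * Nat.choose (n - 1) ((n - 1) / 2) ∧
    |∑ σ : Fin n → Bool, (∏ i ∈ W, spin (σ i)) * Int.sign (∑ i, spin (σ i))|
      ≤ 2 * Nat.choose (n - 1) ((n - 1) / 2) := by
  have hodd' : Odd (Fintype.card (Fin n)) := by rwa [Fintype.card_fin]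
  have hcard : ∀ i : Fin n, (#(pivotal i) : ℤ) = 2 * Nat.choose (n - 1) ((n - 1) / 2) := by
    intro i
    rw [card_pivotal hodd' i, Fintype.card_fin]
    push_cast
    rfl
  obtain ⟨i, hi⟩ := hW
  exact ⟨by rw [sum_spin_mul_sign_eq_card_pivotal hodd', hcard],
    by simpa only [hcard] using abs_sum_prod_spin_mul_sign_le_card_pivotal hodd' hi⟩
end

section
/- The sequence s ↦ s·ν(s) = s·C(s-1,(s-1)/2)/2^{s-1}, over odd s, is strictly increasing and unbounded. -/
/-!
Writing `s = 2k + 1`, the quantity is `g k = (2k + 1) · C(2k, k) / 4^k`, and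
`(k + 1) C(2k + 2, k + 1) = 2 (2k + 1) C(2k, k)` gives `g (k + 1) = g k · (2k + 3) / (2k + 2)`.
The ratio exceeds `1`, so `g` is strictly increasing, and it exceeds `√((k + 2) / (k + 1))`,
so `g k ^ 2 ≥ k + 1` by induction and `g` is unbounded.
-/

open Filter

/-- `s·ν(s)` at the odd block size `s = 2k + 1`. -/
noncomputable def sNu (k : ℕ) : ℝ := (2 * k + 1) * Nat.centralBinom k / 4 ^ k

lemma sNu_pos (k : ℕ) : 0 < sNu k := by
  have := Nat.centralBinom_pos k
  unfold sNu
  positivity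

lemma sNu_succ (k : ℕ) : sNu (k + 1) = sNu k * ((2 * k + 3) / (2 * k + 2)) := by
  have hrec : ((k : ℝ) + 1) * Nat.centralBinom (k + 1) = 2 * (2 * k + 1) * Nat.centralBinom k := by
    exact_mod_cast Nat.succ_mul_centralBinom_succ k
  have hcb : (Nat.centralBinom (k + 1) : ℝ) = 2 * (2 * k + 1) * Nat.centralBinom k / (k + 1) := by
    rw [← hrec]
    field_simp
  unfold sNu
  rw [hcb]
  push_cast
  field_simp
  ring

lemma sNu_strictMono : StrictMono sNu := by
  refine strictMono_nat_of_lt_succ fun k => ?_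
  have hratio : (1 : ℝ) < (2 * k + 3) / (2 * k + 2) := by
    rw [one_lt_div (by positivity)]
    linarith
  rw [sNu_succ]
  exact lt_mul_of_one_lt_right (sNu_pos k) hratio

lemma add_one_le_sNu_sq (k : ℕ) : (k : ℝ) + 1 ≤ sNu k ^ 2 := by
  induction k with
  | zero => simp [sNu]
  | succ k ih =>
    have hratio_sq : (k : ℝ) + 2 ≤ (k + 1) * ((2 * k + 3) / (2 * k + 2)) ^ 2 := by
      rw [div_pow, mul_div_assoc', le_div_iff₀ (by positivity)]
      nlinarith
    push_cast
    calc (k : ℝ) + 1 + 1 ≤ (k + 1) * ((2 * k + 3) / (2 * k + 2)) ^ 2 := by linarith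
      _ ≤ sNu k ^ 2 * ((2 * k + 3) / (2 * k + 2)) ^ 2 := by gcongr
      _ = sNu (k + 1) ^ 2 := by rw [sNu_succ, mul_pow]

lemma tendsto_sNu_atTop : Tendsto sNu atTop atTop := by
  have hsqrt : Tendsto (fun k : ℕ => √((k : ℝ) + 1)) atTop atTop :=
    Real.tendsto_sqrt_atTop.comp (tendsto_atTop_add_const_right _ 1 tendsto_natCast_atTop_atTop)
  exact tendsto_atTop_mono
    (fun k => Real.sqrt_le_iff.mpr ⟨(sNu_pos k).le, add_one_le_sNu_sq k⟩) hsqrt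

lemma odd_mul_centralBinom_ratio_eq_sNu (k : ℕ) :
    ((2 * k + 1 : ℕ) : ℝ) * ((Nat.choose (2 * k + 1 - 1) ((2 * k + 1 - 1) / 2) : ℝ)
      / 2 ^ (2 * k + 1 - 1)) = sNu k := by
  rw [Nat.add_sub_cancel, Nat.mul_div_cancel_left k two_pos, ← Nat.centralBinom_eq_two_mul_choose,
    pow_mul]
  unfold sNu
  push_cast
  ring

/-- The sequence `s ↦ s·ν(s) = s·C(s-1,(s-1)/2)/2^(s-1)`, over odd `s`, is strictly
increasing and unbounded. -/
theorem s_nu_strict_mono_unbounded :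
    (∀ s t : ℕ, Odd s → Odd t → s < t →
      (s : ℝ) * ((Nat.choose (s - 1) ((s - 1) / 2) : ℝ) / 2 ^ (s - 1)) <
        (t : ℝ) * ((Nat.choose (t - 1) ((t - 1) / 2) : ℝ) / 2 ^ (t - 1))) ∧
    (∀ C : ℝ, ∃ s : ℕ, Odd s ∧
      C < (s : ℝ) * ((Nat.choose (s - 1) ((s - 1) / 2) : ℝ) / 2 ^ (s - 1))) := by
  constructor
  · rintro _ _ ⟨a, rfl⟩ ⟨b, rfl⟩ hab
    rw [odd_mul_centralBinom_ratio_eq_sNu, odd_mul_centralBinom_ratio_eq_sNu]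
    exact sNu_strictMono (by omega)
  · intro C
    obtain ⟨k, hk⟩ := (tendsto_sNu_atTop.eventually_gt_atTop C).exists
    exact ⟨2 * k + 1, odd_two_mul_add_one k, by rwa [odd_mul_centralBinom_ratio_eq_sNu]⟩
end
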